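/- Let ω be a radial weight. Then ω belongs to the class D = D̂ ∩ Ď if and only if there exist constants C ≥ 1 and 0 < α ≤ β such that C⁻¹·((1−r)/(1−t))^α·ω̂(t) ≤ ω̂(r) ≤ C·((1−r)/(1−t))^β·ω̂(t) for all 0 ≤ r ≤ t < 1. -/

import Mathlib

open MeasureTheory Complex Filter Topology
open scoped ENNReal NNReal

noncomputable section

/-- The normalized area measure `dA = dxdy/π` on `ℂ`. -/
def dA : Measure ℂ := (ENNReal.ofReal (1 / Real.pi)) • volume

/-- The open unit disc `𝔻` in `ℂ`. -/
def unitDisc : Set ℂ := Metric.ball (0 : ℂ) 1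

/-- `ω̂(r) = ∫_r^1 ω(s) ds` for a radial weight `ω`. -/
def wHat (ω : ℂ → ℝ) (r : ℝ) : ℝ := ∫ s in r..(1 : ℝ), ω ((s : ℝ) : ℂ)

/-- `ω(E) = ∫_E ω dA`. -/
def wInt (ω : ℂ → ℝ) (E : Set ℂ) : ℝ := ∫ z in E, ω z ∂dA

/-- A radial weight: nonnegative, radial, integrable on `𝔻`, with `ω̂ > 0` on `[0,1)`. -/
def RadialWeight (ω : ℂ → ℝ) : Prop :=
  (∀ z, 0 ≤ ω z) ∧ (∀ z : ℂ, ω z = ω ((‖z‖ : ℝ) : ℂ)) ∧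
  MeasureTheory.IntegrableOn ω unitDisc dA ∧
  (∀ r : ℝ, 0 ≤ r → r < 1 → 0 < wHat ω r)

/-- The class `D̂` of upper doubling radial weights. -/
def memDhat (ω : ℂ → ℝ) : Prop :=
  ∃ C : ℝ, 1 ≤ C ∧ ∀ r : ℝ, 0 ≤ r → r < 1 → wHat ω r ≤ C * wHat ω ((1 + r) / 2)

/-- The class `Ď`. -/
def memDcheck (ω : ℂ → ℝ) : Prop :=
  ∃ K C : ℝ, 1 < K ∧ 1 < C ∧ ∀ r : ℝ, 0 ≤ r → r < 1 →
    C * wHat ω (1 - (1 - r) / K) ≤ wHat ω r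

/-- The class `D = D̂ ∩ Ď`. -/
def memD (ω : ℂ → ℝ) : Prop := memDhat ω ∧ memDcheck ω

/-- The class `R` of regular weights: `ω ∈ D` and `ω̂(r) ≍ ω(r)(1-r)`. -/
def memR (ω : ℂ → ℝ) : Prop :=
  memD ω ∧ ∃ C : ℝ, 1 ≤ C ∧ ∀ r : ℝ, 0 ≤ r → r < 1 →
    C⁻¹ * (ω ((r : ℝ) : ℂ) * (1 - r)) ≤ wHat ω r ∧
    wHat ω r ≤ C * (ω ((r : ℝ) : ℂ) * (1 - r))

/-- Pseudohyperbolic distance `ρ(z,w)`. -/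
def pseudoDist (z w : ℂ) : ℝ := ‖(z - w) / (1 - (starRingEnd ℂ) z * w)‖

/-- The Bergman metric `β(z,w)`. -/
def bergmanDist (z w : ℂ) : ℝ :=
  (1 / 2) * Real.log ((1 + pseudoDist z w) / (1 - pseudoDist z w))

/-- Bergman disc `D(z,r)`. -/
def bergmanDisc (z : ℂ) (r : ℝ) : Set ℂ := {w ∈ unitDisc | bergmanDist z w < r}

/-- Pseudohyperbolic disc `Δ(a,r)`. -/
def pseudoDisc (a : ℂ) (r : ℝ) : Set ℂ := {z ∈ unitDisc | pseudoDist z a < r}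

/-- The Bergman reproducing kernel of `A_ω^2`:
`B_z^ω(ζ) = ∑ (ζ z̄)^n / (2∫_0^1 s^{2n+1} ω(s) ds)`. -/
def bergmanKernel (ω : ℂ → ℝ) (z ζ : ℂ) : ℂ :=
  ∑' n : ℕ, (ζ * (starRingEnd ℂ) z) ^ n /
    (((2 * ∫ s in (0:ℝ)..1, s ^ (2 * n + 1) * ω ((s : ℝ) : ℂ) : ℝ) : ℂ))

/-- The Bergman projection `P_ω`. -/
def bergmanProj (ω : ℂ → ℝ) (f : ℂ → ℂ) (z : ℂ) : ℂ :=
  ∫ ζ in unitDisc, f ζ * (starRingEnd ℂ) (bergmanKernel ω z ζ) * ((ω ζ : ℝ) : ℂ) ∂dA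

/-- The Hankel operator `H_f^ω(g) = fg - P_ω(fg)`. -/
def hankelOp (ω : ℂ → ℝ) (f g : ℂ → ℂ) : ℂ → ℂ :=
  fun z => f z * g z - bergmanProj ω (fun ζ => f ζ * g ζ) z

/-- The norm `‖f‖_{L_v^p} = (∫_𝔻 |f|^p v dA)^{1/p}`, valued in `ℝ≥0∞`. -/
def LpNormW (p : ℝ) (v : ℂ → ℝ) (f : ℂ → ℂ) : ℝ≥0∞ :=
  (∫⁻ z in unitDisc, ENNReal.ofReal (‖f z‖ ^ p * v z) ∂dA) ^ (1 / p)

/-- The same norm for real-valued functions. -/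
def LpNormWR (p : ℝ) (v : ℂ → ℝ) (F : ℂ → ℝ) : ℝ≥0∞ :=
  (∫⁻ z in unitDisc, ENNReal.ofReal (|F z| ^ p * v z) ∂dA) ^ (1 / p)

/-- Membership in `L_v^p`. -/
def MemLw (p : ℝ) (v : ℂ → ℝ) (f : ℂ → ℂ) : Prop :=
  AEStronglyMeasurable f (dA.restrict unitDisc) ∧ LpNormW p v f < ⊤

/-- Membership in the Bergman space `A_v^p`. -/
def MemA (p : ℝ) (v : ℂ → ℝ) (f : ℂ → ℂ) : Prop :=
  DifferentiableOn ℂ f unitDisc ∧ LpNormW p v f < ⊤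

/-- Bounded holomorphic functions on `𝔻`. -/
def MemHinf (g : ℂ → ℂ) : Prop :=
  DifferentiableOn ℂ g unitDisc ∧ ∃ M : ℝ, ∀ z ∈ unitDisc, ‖g z‖ ≤ M

/-- The Wirtinger derivative `∂̄f`. -/
def dbar (f : ℂ → ℂ) (z : ℂ) : ℂ :=
  (fderiv ℝ f z 1 + Complex.I * fderiv ℝ f z Complex.I) / 2

/-- The distance-to-analytic function
`G_{q,r}(f)(z) = inf { ((1/|D(z,r)|)∫_{D(z,r)} |f-h|^q dA)^{1/q} : h ∈ H(D(z,r)) }`. -/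
def Gqr (q r : ℝ) (f : ℂ → ℂ) (z : ℂ) : ℝ :=
  sInf {t : ℝ | ∃ h : ℂ → ℂ, DifferentiableOn ℂ h (bergmanDisc z r) ∧
    t = (((dA (bergmanDisc z r)).toReal)⁻¹ *
      ∫ w in bergmanDisc z r, ‖f w - h w‖ ^ q ∂dA) ^ (1 / q)}

/-- The average `M_r(φ)(z) = (1/|D(z,r)|)∫_{D(z,r)} φ dA`. -/
def Mavg (r : ℝ) (φ : ℂ → ℝ) (z : ℂ) : ℝ :=
  ((dA (bergmanDisc z r)).toReal)⁻¹ * ∫ w in bergmanDisc z r, φ w ∂dA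

/-- `[ω](z) = ω̂(z)(1-|z|)`. -/
def brk (ω : ℂ → ℝ) (z : ℂ) : ℝ := wHat ω ‖z‖ * (1 - ‖z‖)

/-- `σ = (ω / v^{1/p})^{p'}` with `p' = p/(p-1)`. -/
def sigmaW (p : ℝ) (ω v : ℂ → ℝ) : ℂ → ℝ :=
  fun z => (ω z / (v z) ^ (1 / p)) ^ (p / (p - 1))

/-- `A_p(ω,v) = sup_{0≤r<1} v̂(r)^{1/p} σ̂(r)^{1/p'} / ω̂(r) < ∞`. -/
def ApFin (p : ℝ) (ω v : ℂ → ℝ) : Prop :=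
  ∃ C : ℝ, 0 < C ∧ ∀ r : ℝ, 0 ≤ r → r < 1 →
    (wHat v r) ^ (1 / p) * (wHat (sigmaW p ω v) r) ^ (1 - 1 / p) ≤ C * wHat ω r

/-- An `r`-lattice in the Bergman metric. -/
def IsLattice (r : ℝ) (zs : ℕ → ℂ) : Prop :=
  (∀ j, zs j ∈ unitDisc) ∧ (unitDisc ⊆ ⋃ j, bergmanDisc (zs j) r) ∧
  ∀ i j, i ≠ j → r / 2 ≤ bergmanDist (zs i) (zs j)

/-- The filter `|z| → 1⁻` inside `𝔻`. -/
def toBdry : Filter ℂ :=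
  (Filter.comap (fun z : ℂ => ‖z‖) (nhdsWithin 1 (Set.Iio 1))) ⊓
    Filter.principal unitDisc

/-- `μ` is a `q`-Carleson measure for `A_ω^p`: the embedding `A_ω^p ↪ L^q(μ)` is bounded. -/
def IsCarleson (p q : ℝ) (ω : ℂ → ℝ) (μ : Measure ℂ) : Prop :=
  ∃ C : ℝ, 0 < C ∧ ∀ f : ℂ → ℂ, MemA p ω f →
    (∫⁻ z in unitDisc, ENNReal.ofReal (‖f z‖ ^ q) ∂μ) ≤
      ENNReal.ofReal C * (LpNormW p ω f) ^ q

/-- `μ` is a vanishing `q`-Carleson measure for `A_ω^p`. -/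
def IsVanishingCarleson (p q : ℝ) (ω : ℂ → ℝ) (μ : Measure ℂ) : Prop :=
  ∀ g : ℕ → ℂ → ℂ,
    (∀ n, MemA p ω (g n) ∧ LpNormW p ω (g n) ≤ 1) →
    (∀ K : Set ℂ, K ⊆ unitDisc → IsCompact K →
      TendstoUniformlyOn g (fun _ => (0 : ℂ)) Filter.atTop K) →
    Filter.Tendsto
      (fun n => ∫⁻ z in unitDisc, ENNReal.ofReal (‖g n z‖ ^ q) ∂μ)
      Filter.atTop (nhds 0)

/-- `‖Id‖^q_{A_ω^p → L^q(μ)}`: the least admissible constant. -/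
def idNormPowQ (p q : ℝ) (ω : ℂ → ℝ) (μ : Measure ℂ) : ℝ≥0∞ :=
  sInf {c : ℝ≥0∞ | ∀ f : ℂ → ℂ, MemA p ω f →
    (∫⁻ z in unitDisc, ENNReal.ofReal (‖f z‖ ^ q) ∂μ) ≤ c * (LpNormW p ω f) ^ q}

/-- `sup_{z∈𝔻} μ(D(z,r))/ω(D(z,r))^s`. -/
def carlesonSup (μ : Measure ℂ) (ω : ℂ → ℝ) (s r : ℝ) : ℝ≥0∞ :=
  ⨆ z ∈ unitDisc, μ (bergmanDisc z r) / ENNReal.ofReal ((wInt ω (bergmanDisc z r)) ^ s)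

/-- `H_f^ω : A_v^p → L_η^q` is bounded with constant `C`. -/
def HankelBddWith (ω v η : ℂ → ℝ) (p q : ℝ) (f : ℂ → ℂ) (C : ℝ) : Prop :=
  ∀ g : ℂ → ℂ, MemHinf g →
    LpNormW q η (hankelOp ω f g) ≤ ENNReal.ofReal C * LpNormW p v g

/-- `H_f^ω : A_v^p → L_η^q` is bounded. -/
def HankelBdd (ω v η : ℂ → ℝ) (p q : ℝ) (f : ℂ → ℂ) : Prop :=
  ∃ C : ℝ, 0 < C ∧ HankelBddWith ω v η p q f C

/-- `H_f^ω : A_v^p → L_η^q` is compact. -/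
def HankelCompact (ω v η : ℂ → ℝ) (p q : ℝ) (f : ℂ → ℂ) : Prop :=
  HankelBdd ω v η p q f ∧
  ∀ g : ℕ → ℂ → ℂ,
    (∀ n, MemHinf (g n) ∧ LpNormW p v (g n) ≤ 1) →
    (∀ K : Set ℂ, K ⊆ unitDisc → IsCompact K →
      TendstoUniformlyOn g (fun _ => (0 : ℂ)) Filter.atTop K) →
    Filter.Tendsto (fun n => LpNormW q η (hankelOp ω f (g n))) Filter.atTop (nhds 0)

end

/-!
Write `x = (1 - r)/(1 - t) ≥ 1`. Iterating the `D̂` condition `n ≈ log₂ x` times moves `r` past `t`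
and costs a factor `C^n ≈ x^{log₂ C}`; iterating the `Ď` condition `n ≈ log_K x` times stays below
`t` and gains a factor `C^n ≈ x^{log_K C}`. Conversely, the power bounds with `t = (1 + r)/2`, resp.
`(1 - r)/(1 - t) = K` for `K` large, give back `D̂` and `Ď`.
-/

open Set Real

lemma one_sub_div_mem_Ico {K r : ℝ} (hK : 1 ≤ K) (hr : r ∈ Ico (0 : ℝ) 1) :
    1 - (1 - r) / K ∈ Ico (0 : ℝ) 1 := by
  have h1r : 0 < 1 - r := by linarith [hr.2]
  constructor
  · linarith [hr.1, div_le_self h1r.le hK]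
  · linarith [div_pos h1r (zero_lt_one.trans_le hK)]

lemma rpow_logb_comm {C x : ℝ} (K : ℝ) (hC : 0 < C) (hx : 0 < x) :
    C ^ logb K x = x ^ logb K C := by
  rw [rpow_def_of_pos hC, rpow_def_of_pos hx, logb, logb]
  ring_nf

section Iteration

variable {f : ℝ → ℝ} {K C : ℝ}

lemma le_pow_mul_of_le_mul (hK : 1 ≤ K) (hC : 0 ≤ C)
    (h : ∀ r ∈ Ico (0 : ℝ) 1, f r ≤ C * f (1 - (1 - r) / K)) (n : ℕ) {r : ℝ}
    (hr : r ∈ Ico (0 : ℝ) 1) : f r ≤ C ^ n * f (1 - (1 - r) / K ^ n) := by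
  induction n with
  | zero => simp
  | succ n ih =>
    have hs := one_sub_div_mem_Ico (one_le_pow₀ hK (n := n)) hr
    have hstep : 1 - (1 - (1 - (1 - r) / K ^ n)) / K = 1 - (1 - r) / K ^ (n + 1) := by
      have hK0 : K ≠ 0 := (zero_lt_one.trans_le hK).ne'
      rw [pow_succ]; field_simp; ring
    calc f r ≤ C ^ n * f (1 - (1 - r) / K ^ n) := ih
      _ ≤ C ^ n * (C * f (1 - (1 - r) / K ^ (n + 1))) := by
        rw [← hstep]; exact mul_le_mul_of_nonneg_left (h _ hs) (pow_nonneg hC n)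
      _ = C ^ (n + 1) * f (1 - (1 - r) / K ^ (n + 1)) := by ring

lemma pow_mul_le_of_mul_le (hK : 1 ≤ K) (hC : 0 ≤ C)
    (h : ∀ r ∈ Ico (0 : ℝ) 1, C * f (1 - (1 - r) / K) ≤ f r) (n : ℕ) {r : ℝ}
    (hr : r ∈ Ico (0 : ℝ) 1) : C ^ n * f (1 - (1 - r) / K ^ n) ≤ f r := by
  have h' : ∀ r ∈ Ico (0 : ℝ) 1, (-f) r ≤ C * (-f) (1 - (1 - r) / K) := fun r hr => by
    simpa using h r hr
  simpa using le_pow_mul_of_le_mul hK hC h' n hr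

lemma le_mul_rpow_mul_of_le_mul (hf : AntitoneOn f (Ico 0 1))
    (hf0 : ∀ r ∈ Ico (0 : ℝ) 1, 0 ≤ f r) (hK : 1 < K) (hC : 1 ≤ C)
    (h : ∀ r ∈ Ico (0 : ℝ) 1, f r ≤ C * f (1 - (1 - r) / K)) {r t : ℝ}
    (hr : 0 ≤ r) (hrt : r ≤ t) (ht : t < 1) :
    f r ≤ C * ((1 - r) / (1 - t)) ^ logb K C * f t := by
  set x := (1 - r) / (1 - t)
  have h1t : 0 < 1 - t := by linarith
  have hx : 1 ≤ x := (le_div_iff₀ h1t).2 (by linarith)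
  set n := ⌈logb K x⌉₊
  have hxn : x ≤ K ^ n := by
    rw [← rpow_natCast, ← logb_le_iff_le_rpow hK (by linarith)]
    exact Nat.le_ceil _
  have hr' : r ∈ Ico (0 : ℝ) 1 := ⟨hr, hrt.trans_lt ht⟩
  have hts : t ≤ 1 - (1 - r) / K ^ n := by
    have : (1 - r) / K ^ n ≤ 1 - t := by
      rw [div_le_iff₀ (by positivity)]
      calc 1 - r = x * (1 - t) := (div_mul_cancel₀ _ h1t.ne').symm
        _ ≤ K ^ n * (1 - t) := by gcongr
        _ = (1 - t) * K ^ n := mul_comm _ _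
    linarith
  have hCn : C ^ n ≤ C * x ^ logb K C := by
    calc C ^ n = C ^ (n : ℝ) := (rpow_natCast C n).symm
      _ ≤ C ^ (logb K x + 1) :=
        rpow_le_rpow_of_exponent_le hC (Nat.ceil_lt_add_one (logb_nonneg hK hx)).le
      _ = C * x ^ logb K C := by
        rw [rpow_add (by linarith), rpow_one, rpow_logb_comm K (by linarith) (by linarith),
          mul_comm]
  calc f r ≤ C ^ n * f (1 - (1 - r) / K ^ n) := le_pow_mul_of_le_mul hK.le (by linarith) h n hr'
    _ ≤ C ^ n * f t := by
      gcongr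
      exact hf ⟨hr.trans hrt, ht⟩ (one_sub_div_mem_Ico (one_le_pow₀ hK.le) hr') hts
    _ ≤ C * x ^ logb K C * f t := by gcongr; exact hf0 t ⟨hr.trans hrt, ht⟩

lemma inv_mul_rpow_mul_le_of_mul_le (hf : AntitoneOn f (Ico 0 1))
    (hf0 : ∀ r ∈ Ico (0 : ℝ) 1, 0 ≤ f r) (hK : 1 < K) (hC : 1 ≤ C)
    (h : ∀ r ∈ Ico (0 : ℝ) 1, C * f (1 - (1 - r) / K) ≤ f r) {r t : ℝ}
    (hr : 0 ≤ r) (hrt : r ≤ t) (ht : t < 1) :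
    C⁻¹ * ((1 - r) / (1 - t)) ^ logb K C * f t ≤ f r := by
  set x := (1 - r) / (1 - t)
  have h1t : 0 < 1 - t := by linarith
  have hx : 1 ≤ x := (le_div_iff₀ h1t).2 (by linarith)
  set n := ⌊logb K x⌋₊
  have hxn : K ^ n ≤ x := by
    rw [← rpow_natCast, ← le_logb_iff_rpow_le hK (by linarith)]
    exact Nat.floor_le (logb_nonneg hK hx)
  have hr' : r ∈ Ico (0 : ℝ) 1 := ⟨hr, hrt.trans_lt ht⟩
  have hst : 1 - (1 - r) / K ^ n ≤ t := by
    have : 1 - t ≤ (1 - r) / K ^ n := by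
      rw [le_div_iff₀ (by positivity)]
      calc (1 - t) * K ^ n ≤ (1 - t) * x := by gcongr
        _ = 1 - r := mul_div_cancel₀ _ h1t.ne'
    linarith
  have hCn : C⁻¹ * x ^ logb K C ≤ C ^ n := by
    rw [inv_mul_le_iff₀ (by linarith), ← rpow_logb_comm K (by linarith) (by linarith),
      ← pow_succ', ← rpow_natCast, Nat.cast_succ]
    exact rpow_le_rpow_of_exponent_le hC (Nat.lt_floor_add_one _).le
  calc C⁻¹ * x ^ logb K C * f t ≤ C ^ n * f t := by gcongr; exact hf0 t ⟨hr.trans hrt, ht⟩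
    _ ≤ C ^ n * f (1 - (1 - r) / K ^ n) := by
      gcongr
      exact hf (one_sub_div_mem_Ico (one_le_pow₀ hK.le) hr') ⟨hr.trans hrt, ht⟩ hst
    _ ≤ f r := pow_mul_le_of_mul_le hK.le (by linarith) h n hr'

end Iteration

section RadialWeight

variable {ω : ℂ → ℝ}

-- If `ω` were not integrable on `[0,1]`, `ω̂(0)` would be the junk value `0`.
lemma RadialWeight.intervalIntegrable (hω : RadialWeight ω) {r : ℝ} (hr0 : 0 ≤ r)
    (hr1 : r ≤ 1) :
    IntervalIntegrable (fun s : ℝ => ω s) volume r 1 := by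
  have h01 : IntervalIntegrable (fun s : ℝ => ω s) volume 0 1 := by
    by_contra h
    have h0 := hω.2.2.2 0 le_rfl one_pos
    rw [wHat, intervalIntegral.integral_undef h] at h0
    exact lt_irrefl 0 h0
  exact h01.mono_set (uIcc_subset_uIcc (mem_uIcc_of_le hr0 hr1) right_mem_uIcc)

lemma RadialWeight.wHat_antitoneOn (hω : RadialWeight ω) : AntitoneOn (wHat ω) (Ico 0 1) :=
  fun _ hr _ ht hrt => intervalIntegral.integral_mono_interval hrt ht.2.le le_rfl
    (Eventually.of_forall fun s => hω.1 s) (hω.intervalIntegrable hr.1 hr.2.le)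

end RadialWeight

section Converse

variable {ω : ℂ → ℝ} {C : ℝ}

lemma memDhat_of_le_mul_rpow {β : ℝ} (hC : 1 ≤ C) (hβ : 0 ≤ β)
    (h : ∀ r t : ℝ, 0 ≤ r → r ≤ t → t < 1 →
      wHat ω r ≤ C * ((1 - r) / (1 - t)) ^ β * wHat ω t) :
    memDhat ω := by
  refine ⟨C * 2 ^ β, one_le_mul_of_one_le_of_one_le hC (one_le_rpow one_le_two hβ),
    fun r hr0 hr1 => ?_⟩
  have hx : (1 - r) / (1 - (1 + r) / 2) = 2 := by
    rw [div_eq_iff (by linarith)]; ring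
  simpa [hx] using h r ((1 + r) / 2) hr0 (by linarith) (by linarith)

lemma memDcheck_of_inv_mul_rpow_le {α : ℝ} (hC : 1 ≤ C) (hα : 0 < α)
    (h : ∀ r t : ℝ, 0 ≤ r → r ≤ t → t < 1 →
      C⁻¹ * ((1 - r) / (1 - t)) ^ α * wHat ω t ≤ wHat ω r) :
    memDcheck ω := by
  set K := (2 * C) ^ α⁻¹
  have hK : 1 < K := one_lt_rpow (by linarith) (inv_pos.2 hα)
  have hKα : K ^ α = 2 * C := by
    rw [← rpow_mul (by linarith), inv_mul_cancel₀ hα.ne', rpow_one]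
  refine ⟨K, 2, hK, one_lt_two, fun r hr0 hr1 => ?_⟩
  have h1r : 0 < 1 - r := by linarith
  have hx : (1 - r) / (1 - (1 - (1 - r) / K)) = K := by
    rw [sub_sub_cancel, div_div_cancel₀ h1r.ne']
  have hrt : r ≤ 1 - (1 - r) / K := by linarith [div_le_self h1r.le hK.le]
  have ht : 1 - (1 - r) / K < 1 := by linarith [div_pos h1r (zero_lt_one.trans hK)]
  have key := h r _ hr0 hrt ht
  rwa [hx, hKα, mul_comm 2 C, inv_mul_cancel_left₀ (zero_lt_one.trans_le hC).ne'] at key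

end Converse

/-- `ω ∈ D` iff two-sided power-type doubling of `ω̂`. -/
theorem statement0 (ω : ℂ → ℝ) (hω : RadialWeight ω) :
    memD ω ↔
      ∃ C α β : ℝ, 1 ≤ C ∧ 0 < α ∧ α ≤ β ∧
        ∀ r t : ℝ, 0 ≤ r → r ≤ t → t < 1 →
          C⁻¹ * (((1 - r) / (1 - t)) ^ α) * wHat ω t ≤ wHat ω r ∧
          wHat ω r ≤ C * (((1 - r) / (1 - t)) ^ β) * wHat ω t := by
  constructor
  · rintro ⟨⟨C, hC, hup⟩, ⟨K, C', hK, hC', hlow⟩⟩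
    have hf := hω.wHat_antitoneOn
    have hf0 : ∀ r ∈ Ico (0 : ℝ) 1, 0 ≤ wHat ω r := fun r hr => (hω.2.2.2 r hr.1 hr.2).le
    have hup' : ∀ r ∈ Ico (0 : ℝ) 1, wHat ω r ≤ C * wHat ω (1 - (1 - r) / 2) := fun r hr => by
      rw [show 1 - (1 - r) / 2 = (1 + r) / 2 by ring]; exact hup r hr.1 hr.2
    refine ⟨max C C', logb K C', max (logb K C') (logb 2 C), hC.trans (le_max_left _ _),
      logb_pos hK hC', le_max_left _ _, fun r t hr hrt ht => ?_⟩
    have hwt := hf0 t ⟨hr.trans hrt, ht⟩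
    have hx : 1 ≤ (1 - r) / (1 - t) := (le_div_iff₀ (by linarith)).2 (by linarith)
    constructor
    · calc (max C C')⁻¹ * ((1 - r) / (1 - t)) ^ logb K C' * wHat ω t
          ≤ C'⁻¹ * ((1 - r) / (1 - t)) ^ logb K C' * wHat ω t := by
            gcongr
            exact le_max_right C C'
        _ ≤ wHat ω r := inv_mul_rpow_mul_le_of_mul_le hf hf0 hK hC'.le
            (fun r hr => hlow r hr.1 hr.2) hr hrt ht
    · calc wHat ω r ≤ C * ((1 - r) / (1 - t)) ^ logb 2 C * wHat ω t :=
            le_mul_rpow_mul_of_le_mul hf hf0 one_lt_two hC hup' hr hrt ht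
        _ ≤ max C C' * ((1 - r) / (1 - t)) ^ max (logb K C') (logb 2 C) * wHat ω t := by
            gcongr
            · exact le_max_left C C'
            · exact le_max_right _ _
  · rintro ⟨C, α, β, hC, hα, hαβ, h⟩
    exact ⟨memDhat_of_le_mul_rpow hC (hα.le.trans hαβ) fun r t hr hrt ht => (h r t hr hrt ht).2,
      memDcheck_of_inv_mul_rpow_le hC hα fun r t hr hrt ht => (h r t hr hrt ht).1⟩
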